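/- Let A be a bounded distributive lattice that is normal (for all a, b with a ⊓ b = ⊥ there exist a', b' with a ⊓ a' = ⊥, b ⊓ b' = ⊥, and a' ⊔ b' = ⊤). Then every prime filter of A is contained in a unique maximal proper filter of A. -/
import Mathlib


open Set

universe u v

/-- A (lattice) filter: a nonempty, upward-closed subset closed under meets. -/
def IsLatFilter {A : Type u} [DistribLattice A] [BoundedOrder A] (F : Set A) : Prop :=
  F.Nonempty ∧ (∀ a ∈ F, ∀ b : A, a ≤ b → b ∈ F) ∧ ∀ a ∈ F, ∀ b ∈ F, a ⊓ b ∈ F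

/-- A proper filter: a filter omitting `⊥`. -/
def IsProperLatFilter {A : Type u} [DistribLattice A] [BoundedOrder A] (F : Set A) : Prop :=
  IsLatFilter F ∧ (⊥ : A) ∉ F

/-- A prime filter: a proper filter `F` with `a ⊔ b ∈ F → a ∈ F ∨ b ∈ F`. -/
def IsPrimeLatFilter {A : Type u} [DistribLattice A] [BoundedOrder A] (F : Set A) : Prop :=
  IsProperLatFilter F ∧ ∀ a b : A, a ⊔ b ∈ F → a ∈ F ∨ b ∈ F

/-- A maximal filter: a proper filter maximal under inclusion. -/
def IsMaxLatFilter {A : Type u} [DistribLattice A] [BoundedOrder A] (F : Set A) : Prop :=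
  IsProperLatFilter F ∧ ∀ G : Set A, IsProperLatFilter G → F ⊆ G → G = F

/-- A bounded distributive lattice is normal if disjoint elements can be
separated: whenever `a ⊓ b = ⊥` there are `a', b'` with `a ⊓ a' = ⊥`,
`b ⊓ b' = ⊥` and `a' ⊔ b' = ⊤`. -/
def IsNormalLattice (A : Type u) [DistribLattice A] [BoundedOrder A] : Prop :=
  ∀ a b : A, a ⊓ b = ⊥ → ∃ a' b' : A, a ⊓ a' = ⊥ ∧ b ⊓ b' = ⊥ ∧ a' ⊔ b' = ⊤

/-- A bounded distributive lattice is disjunctive if for any two distinct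
elements there is a nonbottom element below one of them and disjoint from the
other. -/
def IsDisjunctiveLattice (A : Type u) [DistribLattice A] [BoundedOrder A] : Prop :=
  ∀ a b : A, a ≠ b → ∃ c : A, c ≠ ⊥ ∧ ((c ≤ a ∧ c ⊓ b = ⊥) ∨ (c ≤ b ∧ c ⊓ a = ⊥))

/-- The maximal spectrum: the set of maximal proper filters of `A`. -/
def MaxSpec (A : Type u) [DistribLattice A] [BoundedOrder A] :=
  {M : Set A // IsMaxLatFilter M}

/-- `a♯ = {M ∈ S(A) : a ∈ M}`. -/
def sharp {A : Type u} [DistribLattice A] [BoundedOrder A] (a : A) : Set (MaxSpec A) :=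
  {M : MaxSpec A | a ∈ M.1}

/-- The spectral topology on `MaxSpec A`, with the sets `a♯` as a closed base. -/
def specTop (A : Type u) [DistribLattice A] [BoundedOrder A] :
    TopologicalSpace (MaxSpec A) :=
  TopologicalSpace.generateFrom {s | ∃ a : A, s = (sharp a)ᶜ}


theorem exists_max_ext {A : Type u} [DistribLattice A] [BoundedOrder A]
    (F : Set A) (hF : IsProperLatFilter F) :
    ∃ M : Set A, IsMaxLatFilter M ∧ F ⊆ M := by
  obtain ⟨M, hFM, hmax⟩ := zorn_subset_nonempty {G : Set A | IsProperLatFilter G}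
    (fun c hc hchain hne => by
      refine ⟨⋃₀ c, ⟨⟨?_, ?_, ?_⟩, ?_⟩, fun s hs => subset_sUnion_of_mem hs⟩
      · obtain ⟨G, hG⟩ := hne
        obtain ⟨x, hx⟩ := (hc hG).1.1
        exact ⟨x, G, hG, hx⟩
      · rintro a ⟨G, hG, ha⟩ b hab
        exact ⟨G, hG, (hc hG).1.2.1 a ha b hab⟩
      · rintro a ⟨G, hG, ha⟩ b ⟨H, hH, hb⟩
        rcases hchain.total hG hH with h | h
        · exact ⟨H, hH, (hc hH).1.2.2 a (h ha) b hb⟩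
        · exact ⟨G, hG, (hc hG).1.2.2 a ha b (h hb)⟩
      · rintro ⟨G, hG, hbot⟩
        exact (hc hG).2 hbot) F hF
  exact ⟨M, ⟨hmax.1, fun G hG hMG => (hmax.2 hG hMG).antisymm hMG⟩, hFM⟩

theorem max_disj {A : Type u} [DistribLattice A] [BoundedOrder A]
    (M : Set A) (hM : IsMaxLatFilter M) (a : A) (ha : a ∉ M) :
    ∃ b ∈ M, a ⊓ b = ⊥ := by
  by_contra h
  push_neg at h
  set G : Set A := {c | ∃ b ∈ M, a ⊓ b ≤ c} with hGdef
  have hMG : M ⊆ G := fun b hb => ⟨b, hb, inf_le_right⟩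
  obtain ⟨x, hx⟩ := hM.1.1.1
  have hGproper : IsProperLatFilter G := by
    refine ⟨⟨⟨x, hMG hx⟩, ?_, ?_⟩, ?_⟩
    · rintro c ⟨b, hb, hle⟩ d hcd
      exact ⟨b, hb, hle.trans hcd⟩
    · rintro c ⟨b, hb, hle⟩ d ⟨b', hb', hle'⟩
      refine ⟨b ⊓ b', hM.1.1.2.2 b hb b' hb', ?_⟩
      calc a ⊓ (b ⊓ b') = (a ⊓ b) ⊓ (a ⊓ b') := by rw [inf_inf_distrib_left]
        _ ≤ c ⊓ d := inf_le_inf hle hle'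
    · rintro ⟨b, hb, hle⟩
      exact h b hb (le_bot_iff.mp hle)
  have hGM : G = M := hM.2 G hGproper hMG
  exact ha (hGM ▸ ⟨x, hx, inf_le_left⟩)

/-- In a normal bounded distributive lattice, every prime filter is contained in
a unique maximal proper filter. -/
theorem prime_filter_unique_maximal_extension {A : Type u} [DistribLattice A]
    [BoundedOrder A] (hA : IsNormalLattice A) (F : Set A) (hF : IsPrimeLatFilter F) :
    ∃! M : Set A, IsMaxLatFilter M ∧ F ⊆ M := by
  obtain ⟨M, hM, hFM⟩ := exists_max_ext F hF.1
  refine ⟨M, ⟨hM, hFM⟩, ?_⟩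
  rintro N ⟨hN, hFN⟩
  by_contra hne
  -- find an element of one not in the other
  have key : ∀ M₁ M₂ : Set A, IsMaxLatFilter M₁ → IsMaxLatFilter M₂ → F ⊆ M₁ → F ⊆ M₂ →
      ∀ a, a ∈ M₁ → a ∉ M₂ → False := by
    intro M₁ M₂ h₁ h₂ hF₁ hF₂ a ha₁ ha₂
    obtain ⟨b, hb, hab⟩ := max_disj M₂ h₂ a ha₂
    obtain ⟨a', b', haa', hbb', htop⟩ := hA a b hab
    have htopF : a' ⊔ b' ∈ F := by
      obtain ⟨x, hx⟩ := hF.1.1.1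
      exact hF.1.1.2.1 x hx _ (htop ▸ le_top)
    rcases hF.2 a' b' htopF with h | h
    · have : a ⊓ a' ∈ M₁ := h₁.1.1.2.2 a ha₁ a' (hF₁ h)
      rw [haa'] at this
      exact h₁.1.2 this
    · have : b ⊓ b' ∈ M₂ := h₂.1.1.2.2 b hb b' (hF₂ h)
      rw [hbb'] at this
      exact h₂.1.2 this
  have hsub : ¬ N ⊆ M := fun h => hne (hN.2 M hM.1 h).symm
  obtain ⟨a, haN, haM⟩ := Set.not_subset.mp hsub
  exact key N M hN hM hFN hFM a haN haM
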